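/- Let n ≥ 1. For every x : Fin n × Fin n → ℝ ∪ {∞}: the minimum, over all permutations σ of Fin n that consist of a single cycle of length n, of Σᵢ x_{i,σ(i)}, equals the minimum over all Boolean matrices Y : Fin n × Fin n → {∞,0} of the quantity P(Y) + Σ_{u,v ∈ Fin n} ( min_{0 ≤ k < n} (Y^k)_{u,v} ) + Σ_{i ∈ Fin n} min_{t ∈ Fin n} ( x_{i,t} + Y_{i,t} ), where Y^k denotes the k-th power of Y as a matrix over the min-plus semiring (Y⁰ being the min-plus identity matrix, with 0 on the diagonal and ∞ off the diagonal), and P(Y) := Σ_{i} (min_{j} Y_{i,j}) + Σ min( Ȳ_{a,b}, Ȳ_{c,d} ), the latter sum over all unordered pairs of distinct positions (a,b) ≠ (c,d) with a = c or b = d. (This is the hypercube-sum expression placing the Hamiltonian cycle family in VNP over min-plus semirings.) -/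

import Mathlib

open MvPolynomial

/-- `𝖱`: the min-plus semiring on `ℝ ∪ {∞}`: tropical addition `+` is `min`
(additive identity `0 = ∞`) and tropical multiplication `*` is ordinary real
addition (multiplicative identity `1` = the real `0`). -/
abbrev TR : Type := Tropical (WithTop ℝ)

/-- The Boolean values of the min-plus semiring, indexed by `Bool`:
`true ↦ 0` (tropical `1`) and `false ↦ ∞` (tropical `0`).
The complement of `bv b` is `bv (!b)`. -/
def bv (S : Type) [Zero S] [One S] (b : Bool) : S := if b then 1 else 0

/-- `P(Y) := Σ_i (min_j Y_{i,j}) + Σ min(Ȳ_{a,b}, Ȳ_{c,d})`, the second sum ranging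
over all unordered pairs of distinct positions (represented by lexicographically
ordered pairs) lying in the same row (`a = c`) or the same column (`b = d`). -/
noncomputable def PY {n : ℕ} (Y : Fin n × Fin n → Bool) : TR :=
  (∏ i : Fin n, ∑ j : Fin n, bv TR (Y (i, j)))
  * ∏ p ∈ Finset.univ.filter
      (fun p : (Fin n × Fin n) × (Fin n × Fin n) =>
        toLex p.1 < toLex p.2 ∧ (p.1.1 = p.2.1 ∨ p.1.2 = p.2.2)),
      (bv TR (!(Y p.1)) + bv TR (!(Y p.2)))

/-- The Boolean matrix `Y` viewed as a matrix over the min-plus semiring, so that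
min-plus matrix powers `(TY Y) ^ k` make sense (with `(TY Y) ^ 0` the min-plus
identity matrix: `0` on the diagonal and `∞` off the diagonal). -/
def TY {n : ℕ} (Y : Fin n × Fin n → Bool) : Matrix (Fin n) (Fin n) TR :=
  fun i j => bv TR (Y (i, j))

open scoped Classical

/-!
All factors take only the values `1` (the real `0`) and `0` (`∞`), except the last. `PY Y` is `1`
exactly when `Y` is the pattern of a permutation matrix: the row minima force a `true` in every
row, and the pair terms forbid two `true`s in a common row or column. For the pattern of `σ`, the
min-plus powers of `TY Y` are the permutation matrices of `σ ^ k`, so the middle factor is `1`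
exactly when `σ` is a single `n`-cycle, and the last factor is `∏ i, x (i, σ i)`. The sum over
`Y` therefore collapses to the sum over single-cycle permutations.
-/

section OneAddOne

variable {S : Type*} [Semiring S]

-- The `Decidable` instance on the right is a free argument, so that the lemma rewrites
-- whatever instance the context carries.
theorem Finset.sum_boole_of_one_add_one (h : (1 : S) + 1 = 1) {ι : Type*} (s : Finset ι)
    (p : ι → Prop) [DecidablePred p] [Decidable (∃ i ∈ s, p i)] :
    ∑ i ∈ s, (if p i then (1 : S) else 0) = if ∃ i ∈ s, p i then 1 else 0 := by
  revert ‹Decidable (∃ i ∈ s, p i)›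
  induction s using Finset.induction_on with
  | empty => simp
  | insert i s hi ih =>
    intro _
    rw [Finset.sum_insert hi, ih]
    by_cases hpi : p i <;> by_cases hs : ∃ j ∈ s, p j <;> simp [hpi, hs, h]

theorem boole_add_boole_of_one_add_one (h : (1 : S) + 1 = 1) (P Q : Prop) [Decidable P]
    [Decidable Q] :
    (if P then (1 : S) else 0) + (if Q then 1 else 0) = if P ∨ Q then 1 else 0 := by
  by_cases hP : P <;> by_cases hQ : Q <;> simp [hP, hQ, h]

end OneAddOne

theorem PY_eq_ite {n : ℕ} (Y : Fin n × Fin n → Bool) :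
    PY Y = if (∀ i, ∃ j, Y (i, j)) ∧ ∀ p q : Fin n × Fin n,
        toLex p < toLex q → (p.1 = q.1 ∨ p.2 = q.2) → Y p = false ∨ Y q = false
      then 1 else 0 := by
  have h1 : (1 : TR) + 1 = 1 := Tropical.add_self 1
  simp only [PY, bv, Finset.sum_boole_of_one_add_one h1, boole_add_boole_of_one_add_one h1,
    Finset.prod_boole, ite_zero_mul_ite_zero, mul_one]
  refine if_congr ?_ rfl rfl
  simp

section PermMatrix

variable {α : Type*} [DecidableEq α]

def permBoolMatrix (σ : Equiv.Perm α) : α × α → Bool :=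
  fun p => decide (σ p.1 = p.2)

theorem permBoolMatrix_injective : Function.Injective (permBoolMatrix (α := α)) := by
  intro σ τ h
  ext i
  simpa [permBoolMatrix, eq_comm] using congrFun h (i, σ i)

theorem exists_permBoolMatrix_eq [Finite α] (Y : α × α → Bool) (hrow : ∀ i, ∃ j, Y (i, j))
    (hline : ∀ p q, Y p → Y q → (p.1 = q.1 ∨ p.2 = q.2) → p = q) :
    ∃ σ, permBoolMatrix σ = Y := by
  choose f hf using hrow
  have hinj : Function.Injective f := fun i i' h =>
    congrArg Prod.fst (hline (i, f i) (i', f i') (hf i) (hf i') (Or.inr h))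
  refine ⟨Equiv.ofBijective f (Finite.injective_iff_bijective.mp hinj), ?_⟩
  funext ⟨i, j⟩
  rw [Bool.eq_iff_iff]
  simp only [permBoolMatrix, Equiv.ofBijective_apply, decide_eq_true_eq]
  exact ⟨by rintro rfl; exact hf i,
    fun hij => congrArg Prod.snd (hline _ _ (hf i) hij (Or.inl rfl))⟩

end PermMatrix

theorem PY_permBoolMatrix {n : ℕ} (σ : Equiv.Perm (Fin n)) : PY (permBoolMatrix σ) = 1 := by
  rw [PY_eq_ite, if_pos]
  refine ⟨fun i => ⟨σ i, by simp [permBoolMatrix]⟩, fun p q hlt hline => ?_⟩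
  by_contra! h
  simp only [permBoolMatrix, ne_eq, Bool.not_eq_false, decide_eq_true_eq] at h
  have hpq : p = q := by
    rcases hline with hrow | hcol
    · exact Prod.ext hrow (by rw [← h.1, ← h.2, hrow])
    · exact Prod.ext (σ.injective (by rw [h.1, h.2, hcol])) hcol
  exact hlt.ne (congrArg toLex hpq)

theorem PY_eq_zero_of_notMem_range {n : ℕ} {Y : Fin n × Fin n → Bool}
    (hY : Y ∉ Set.range permBoolMatrix) : PY Y = 0 := by
  rw [PY_eq_ite, if_neg]
  rintro ⟨hrow, hpair⟩
  refine hY (exists_permBoolMatrix_eq Y hrow fun p q hp hq hline => ?_)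
  by_contra hne
  rcases lt_or_gt_of_ne (toLex.injective.ne hne) with hlt | hlt
  · simpa [hp, hq] using hpair p q hlt hline
  · simpa [hp, hq] using hpair q p hlt (hline.imp Eq.symm Eq.symm)

theorem TY_permBoolMatrix {n : ℕ} (σ : Equiv.Perm (Fin n)) :
    TY (permBoolMatrix σ) = σ.permMatrix TR := by
  ext i j
  simp [TY, permBoolMatrix, bv, PEquiv.toMatrix_apply]

theorem Matrix.permMatrix_pow {m R : Type*} [DecidableEq m] [Fintype m] [Semiring R]
    (σ : Equiv.Perm m) (k : ℕ) : (σ ^ k).permMatrix R = σ.permMatrix R ^ k := by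
  simpa using map_pow (Matrix.permMatrixHom (n := m) (R := R)) σ⁻¹ k

theorem prod_sum_TY_pow_permBoolMatrix {n : ℕ} (σ : Equiv.Perm (Fin n)) :
    ∏ u : Fin n, ∏ v : Fin n, ∑ k ∈ Finset.range n, (TY (permBoolMatrix σ) ^ k) u v
      = if ∀ u v : Fin n, ∃ k < n, (σ ^ k) u = v then 1 else 0 := by
  rw [← Fintype.prod_prod_type']
  simp only [TY_permBoolMatrix, ← Matrix.permMatrix_pow, PEquiv.toMatrix_apply,
    Finset.sum_boole_of_one_add_one (Tropical.add_self (1 : TR)), Fintype.prod_boole]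
  simp

theorem prod_sum_mul_bv_permBoolMatrix {n : ℕ} (σ : Equiv.Perm (Fin n))
    (x : Fin n × Fin n → TR) :
    ∏ i : Fin n, ∑ t : Fin n, x (i, t) * bv TR (permBoolMatrix σ (i, t))
      = ∏ i, x (i, σ i) := by
  simp [permBoolMatrix, bv]

theorem stmt4_general (n : ℕ) (x : Fin n × Fin n → TR) :
    (∑ σ ∈ Finset.univ.filter
        (fun σ : Equiv.Perm (Fin n) => ∀ u v : Fin n, ∃ k < n, (σ ^ k) u = v),
        ∏ i : Fin n, x (i, σ i))
    = ∑ Y : Fin n × Fin n → Bool,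
        PY Y
        * (∏ u : Fin n, ∏ v : Fin n, ∑ k ∈ Finset.range n, (TY Y ^ k) u v)
        * ∏ i : Fin n, ∑ t : Fin n, x (i, t) * bv TR (Y (i, t)) := by
  rw [Finset.sum_filter]
  refine Fintype.sum_of_injective permBoolMatrix permBoolMatrix_injective _ _
    (fun Y hY => ?_) (fun σ => ?_)
  · rw [PY_eq_zero_of_notMem_range hY, zero_mul, zero_mul]
  · rw [PY_permBoolMatrix, one_mul, prod_sum_TY_pow_permBoolMatrix,
      prod_sum_mul_bv_permBoolMatrix, boole_mul]

/-- the minimum over all single-`n`-cycle permutations `σ` of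
`Σᵢ x_{i,σ(i)}` equals the minimum over Boolean matrices `Y` of
`P(Y) + Σ_{u,v} (min_{0 ≤ k < n} (Y^k)_{u,v}) + Σᵢ min_t (x_{i,t} + Y_{i,t})`,
everything in the min-plus semiring (tropical `∑` = min, tropical `∏` = real
addition). A permutation consists of a single cycle of length `n` iff every `v`
lies in the orbit of every `u` under at most `n-1` applications of `σ`. -/
theorem stmt4 (n : ℕ) (hn : 1 ≤ n) (x : Fin n × Fin n → TR) :
    (∑ σ ∈ Finset.univ.filter
        (fun σ : Equiv.Perm (Fin n) => ∀ u v : Fin n, ∃ k < n, (σ ^ k) u = v),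
        ∏ i : Fin n, x (i, σ i))
    = ∑ Y : Fin n × Fin n → Bool,
        PY Y
        * (∏ u : Fin n, ∏ v : Fin n, ∑ k ∈ Finset.range n, (TY Y ^ k) u v)
        * ∏ i : Fin n, ∑ t : Fin n, x (i, t) * bv TR (Y (i, t)) :=
  stmt4_general n x
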